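/- Let T = q1³(q1/2+q2)p1²/(q1−q2) + q2³(q1+q2/2)p2²/(q2−q1), K = q1²q2²(q1²p1−q2²p2)²(p1−p2)/(q1−q2)³, and L = (q1²p1−q2²p2)³(q1²(q1+3q2)p1 + q2²(3q1+q2)p2)/(4(q1−q2)³). Then {T,K} = 0, {T,L} = 0, and {L,K} = K² identically on the open set where q1 ≠ q2 and q1,q2 ≠ 0. -/

import Mathlib

/-- Canonical Poisson bracket of two functions on phase space (q1,q2,p1,p2). -/
noncomputable def pb (f g : ℝ → ℝ → ℝ → ℝ → ℝ) (q1 q2 p1 p2 : ℝ) : ℝ :=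
  (deriv (fun x => f x q2 p1 p2) q1) * (deriv (fun x => g q1 q2 x p2) p1)
  - (deriv (fun x => f q1 q2 x p2) p1) * (deriv (fun x => g x q2 p1 p2) q1)
  + (deriv (fun x => f q1 x p1 p2) q2) * (deriv (fun x => g q1 q2 p1 x) p2)
  - (deriv (fun x => f q1 q2 p1 x) p2) * (deriv (fun x => g q1 x p1 p2) q2)

noncomputable def T (q1 q2 p1 p2 : ℝ) : ℝ :=
  q1^3 * (q1/2 + q2) * p1^2 / (q1 - q2) + q2^3 * (q1 + q2/2) * p2^2 / (q2 - q1)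

noncomputable def K (q1 q2 p1 p2 : ℝ) : ℝ :=
  q1^2 * q2^2 * (q1^2*p1 - q2^2*p2)^2 * (p1 - p2) / (q1 - q2)^3

noncomputable def L (q1 q2 p1 p2 : ℝ) : ℝ :=
  (q1^2*p1 - q2^2*p2)^3 * (q1^2*(q1 + 3*q2)*p1 + q2^2*(3*q1 + q2)*p2)
  / (4*(q1 - q2)^3)

set_option maxHeartbeats 4000000 in
theorem stmt6 (q1 q2 p1 p2 : ℝ) (h : q1 ≠ q2) (h1 : q1 ≠ 0) (h2 : q2 ≠ 0) :
    pb T K q1 q2 p1 p2 = 0 ∧ pb T L q1 q2 p1 p2 = 0 ∧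
    pb L K q1 q2 p1 p2 = (K q1 q2 p1 p2)^2 := by
  have hs : q1 - q2 ≠ 0 := sub_ne_zero.mpr h
  have hs' : q2 - q1 ≠ 0 := sub_ne_zero.mpr (Ne.symm h)
  -- derivatives of T
  have hTq1 := ((((hasDerivAt_pow 3 q1).mul
      (((hasDerivAt_id' q1).div_const 2).add_const q2)).mul_const (p1^2)).div
      ((hasDerivAt_id' q1).sub_const q2) hs).add
    ((((HasDerivAt.const_mul (q2^3) ((hasDerivAt_id' q1).add_const (q2/2))).mul_const (p2^2)).div
      ((hasDerivAt_id' q1).const_sub q2) hs'))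
  have hTp1 := (((HasDerivAt.const_mul (q1^3*(q1/2+q2)) (hasDerivAt_pow 2 p1)).div_const
      (q1-q2)).add_const (q2^3*(q1+q2/2)*p2^2/(q2-q1)))
  have hTq2 := ((((HasDerivAt.const_mul (q1^3) ((hasDerivAt_id' q2).const_add (q1/2))).mul_const
      (p1^2)).div ((hasDerivAt_id' q2).const_sub q1) hs).add
    ((((hasDerivAt_pow 3 q2).mul (((hasDerivAt_id' q2).div_const 2).const_add q1)).mul_const
      (p2^2)).div ((hasDerivAt_id' q2).sub_const q1) hs'))
  have hTp2 := HasDerivAt.const_add (q1^3*(q1/2+q2)*p1^2/(q1-q2))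
    ((HasDerivAt.const_mul (q2^3*(q1+q2/2)) (hasDerivAt_pow 2 p2)).div_const (q2-q1))
  -- derivatives of K
  have hKq1 := ((((hasDerivAt_pow 2 q1).mul_const (q2^2)).mul
      ((((hasDerivAt_pow 2 q1).mul_const p1).sub_const (q2^2*p2)).pow 2)).mul_const
      (p1-p2)).div (((hasDerivAt_id' q1).sub_const q2).pow 3) (pow_ne_zero 3 hs)
  have hKp1 := ((HasDerivAt.const_mul (q1^2*q2^2)
      (((HasDerivAt.const_mul (q1^2) (hasDerivAt_id' p1)).sub_const (q2^2*p2)).pow 2)).mul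
      ((hasDerivAt_id' p1).sub_const p2)).div_const ((q1-q2)^3)
  have hKq2 := (((HasDerivAt.const_mul (q1^2) (hasDerivAt_pow 2 q2)).mul
      ((HasDerivAt.const_sub (q1^2*p1) ((hasDerivAt_pow 2 q2).mul_const p2)).pow 2)).mul_const
      (p1-p2)).div (((hasDerivAt_id' q2).const_sub q1).pow 3) (pow_ne_zero 3 hs)
  have hKp2 := ((HasDerivAt.const_mul (q1^2*q2^2)
      ((HasDerivAt.const_sub (q1^2*p1) (HasDerivAt.const_mul (q2^2) (hasDerivAt_id' p2))).pow 2)).mul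
      ((hasDerivAt_id' p2).const_sub p1)).div_const ((q1-q2)^3)
  -- derivatives of L
  have hLq1 := (((((hasDerivAt_pow 2 q1).mul_const p1).sub_const (q2^2*p2)).pow 3).mul
      ((((hasDerivAt_pow 2 q1).mul ((hasDerivAt_id' q1).add_const (3*q2))).mul_const p1).add
        ((HasDerivAt.const_mul (q2^2)
          ((HasDerivAt.const_mul 3 (hasDerivAt_id' q1)).add_const q2)).mul_const p2))).div
      (HasDerivAt.const_mul 4 (((hasDerivAt_id' q1).sub_const q2).pow 3))
      (mul_ne_zero (by norm_num) (pow_ne_zero 3 hs))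
  have hLp1 := ((((HasDerivAt.const_mul (q1^2) (hasDerivAt_id' p1)).sub_const (q2^2*p2)).pow 3).mul
      ((HasDerivAt.const_mul (q1^2*(q1+3*q2)) (hasDerivAt_id' p1)).add_const
        (q2^2*(3*q1+q2)*p2))).div_const (4*(q1-q2)^3)
  have hLq2 := (((HasDerivAt.const_sub (q1^2*p1) ((hasDerivAt_pow 2 q2).mul_const p2)).pow 3).mul
      (((HasDerivAt.const_mul (q1^2)
          (HasDerivAt.const_add q1 (HasDerivAt.const_mul 3 (hasDerivAt_id' q2)))).mul_const p1).add
        (((hasDerivAt_pow 2 q2).mul ((hasDerivAt_id' q2).const_add (3*q1))).mul_const p2))).div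
      (HasDerivAt.const_mul 4 (((hasDerivAt_id' q2).const_sub q1).pow 3))
      (mul_ne_zero (by norm_num) (pow_ne_zero 3 hs))
  have hLp2 := (((HasDerivAt.const_sub (q1^2*p1)
      (HasDerivAt.const_mul (q2^2) (hasDerivAt_id' p2))).pow 3).mul
      (HasDerivAt.const_add (q1^2*(q1+3*q2)*p1)
        (HasDerivAt.const_mul (q2^2*(3*q1+q2)) (hasDerivAt_id' p2)))).div_const (4*(q1-q2)^3)
  refine ⟨?_, ?_, ?_⟩
  · simp only [pb, T, K]
    erw [hTq1.deriv, hTp1.deriv, hTq2.deriv, hTp2.deriv,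
        hKq1.deriv, hKp1.deriv, hKq2.deriv, hKp2.deriv]
    simp only [Pi.mul_apply, Pi.pow_apply, Pi.div_apply, Pi.add_apply, Pi.sub_apply]
    field_simp
    ring
  · simp only [pb, T, L]
    erw [hTq1.deriv, hTp1.deriv, hTq2.deriv, hTp2.deriv,
        hLq1.deriv, hLp1.deriv, hLq2.deriv, hLp2.deriv]
    simp only [Pi.mul_apply, Pi.pow_apply, Pi.div_apply, Pi.add_apply, Pi.sub_apply]
    field_simp
    ring
  · simp only [pb, K, L]
    erw [hLq1.deriv, hLp1.deriv, hLq2.deriv, hLp2.deriv,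
        hKq1.deriv, hKp1.deriv, hKq2.deriv, hKp2.deriv]
    simp only [Pi.mul_apply, Pi.pow_apply, Pi.div_apply, Pi.add_apply, Pi.sub_apply]
    field_simp
    ring
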